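/- arXiv:hep-th/9511049 — 2 statements merged into one kernel-verified Lean document; each statement's English description precedes it below -/
import Mathlib

section
/- For all real numbers p ≥ q > 0, if c = 1 − 6·(√(p/q) − √(q/p))², then 6·β(c) = 3·(1 − 2·p/q), where β(c) = −(1/12)·(7 − c + √((1 − c)·(25 − c))) with √ the real square root. (In particular (1 − c)·(25 − c) ≥ 0, so the square root is genuine.) -/
/-- The coefficient β of ∂²C in the BRST current, as a function of the matter central charge c. -/
noncomputable def betaCoeff (c : ℝ) : ℝ :=
  -(1/12) * (7 - c + Real.sqrt ((1 - c) * (25 - c)))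

/-- With `t = √(p/q)`, the central charge `1 - 6(√(p/q) - √(q/p))²` of the minimal model. -/
noncomputable def minimalCharge (t : ℝ) : ℝ := 1 - 6 * (t - t⁻¹) ^ 2

lemma discriminant_minimalCharge {t : ℝ} (ht : t ≠ 0) :
    (1 - minimalCharge t) * (25 - minimalCharge t) = (6 * (t ^ 2 - t⁻¹ ^ 2)) ^ 2 := by
  unfold minimalCharge
  field_simp
  ring

lemma sqrt_discriminant_minimalCharge {t : ℝ} (ht : 1 ≤ t) :
    Real.sqrt ((1 - minimalCharge t) * (25 - minimalCharge t)) = 6 * (t ^ 2 - t⁻¹ ^ 2) := by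
  have hinv : t⁻¹ ≤ t := (inv_le_one_of_one_le₀ ht).trans ht
  rw [discriminant_minimalCharge (by positivity), Real.sqrt_sq]
  have := pow_le_pow_left₀ (by positivity) hinv 2
  linarith

lemma six_mul_betaCoeff_minimalCharge {t : ℝ} (ht : 1 ≤ t) :
    6 * betaCoeff (minimalCharge t) = 3 * (1 - 2 * t ^ 2) := by
  rw [betaCoeff, sqrt_discriminant_minimalCharge ht, minimalCharge]
  field_simp
  ring

/-- For the Virasoro minimal-model matter sector c = 1 − 6(√(p/q) − √(q/p))² with
p ≥ q > 0, the N=2 central charge is c_{N=2} = 6·β(c) = 3·(1 − 2p/q); in particular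
(1 − c)·(25 − c) ≥ 0, so the square root is genuine. -/
theorem minimal_model_cN2 (p q : ℝ) (hq : 0 < q) (hpq : q ≤ p) (c : ℝ)
    (hc : c = 1 - 6 * (Real.sqrt (p / q) - Real.sqrt (q / p)) ^ 2) :
    0 ≤ (1 - c) * (25 - c) ∧ 6 * betaCoeff c = 3 * (1 - 2 * p / q) := by
  set t := Real.sqrt (p / q)
  have hc' : c = minimalCharge t := by
    rw [hc, minimalCharge, ← inv_div, Real.sqrt_inv]
  have ht : 1 ≤ t := Real.one_le_sqrt.mpr ((one_le_div hq).mpr hpq)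
  have ht_sq : t ^ 2 = p / q := Real.sq_sqrt (div_nonneg (hq.le.trans hpq) hq.le)
  refine ⟨?_, ?_⟩
  · rw [hc', discriminant_minimalCharge (by positivity)]
    positivity
  · rw [hc', six_mul_betaCoeff_minimalCharge ht, ht_sq, mul_div_assoc]
end

section
/- With the second normalization of the diagonal sl(2|1) in sl(4|3), the fermionic element W = e 5 4 + e 1 7 is a highest weight of a (b,j) = (3/2, 1/2) representation: setting H = (1/2)(e 1 1 − e 2 2) + (1/2)(e 3 3 − e 4 4), E₊ = e 1 2 + e 3 4, Y' = (1/2)(e 1 1 + e 2 2 + 2·e 5 5) − (1/2)(e 3 3 + e 4 4 + 2·e 7 7), F'₊₊ = e 5 2 − e 3 7, F'₊₋ = e 1 5 − e 7 4, one has ⁅H, W⁆ = (1/2)·W, ⁅Y', W⁆ = (3/2)·W, ⁅E₊, W⁆ = 0, {F'₊₊, W} = 0, {F'₊₋, W} = 0. (This representation is absent in the first normalization.) -/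
noncomputable section

open Fin.NatCast

/-- Matrix unit with 1-based indices 1..7 inside sl(4|3), realized as 7×7 complex
matrices (rows/columns 1–4 bosonic, 5–7 fermionic). -/
def e (i j : ℕ) : Matrix (Fin 7) (Fin 7) ℂ :=
  Matrix.single ((i - 1 : ℕ) : Fin 7) ((j - 1 : ℕ) : Fin 7) 1

/-- Anticommutator {X, Y} = X*Y + Y*X. -/
def ac (X Z : Matrix (Fin 7) (Fin 7) ℂ) : Matrix (Fin 7) (Fin 7) ℂ := X * Z + Z * X

/-- Cartan generator H of the diagonal sl(2|1) in 2·sl(2|1) ⊂ sl(4|3). -/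
def H : Matrix (Fin 7) (Fin 7) ℂ :=
  ((1 : ℂ)/2) • (e 1 1 - e 2 2) + ((1 : ℂ)/2) • (e 3 3 - e 4 4)
/-- Raising generator E₊ of the diagonal sl(2|1). -/
def Ep : Matrix (Fin 7) (Fin 7) ℂ := e 1 2 + e 3 4
/-- u(1) generator Y' of the diagonal sl(2|1) (second normalization). -/
def Y' : Matrix (Fin 7) (Fin 7) ℂ :=
  ((1 : ℂ)/2) • (e 1 1 + e 2 2 + (2 : ℂ) • e 5 5) -
    ((1 : ℂ)/2) • (e 3 3 + e 4 4 + (2 : ℂ) • e 7 7)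
/-- Fermionic raising generator F'₊₊ (second normalization). -/
def Fpp' : Matrix (Fin 7) (Fin 7) ℂ := e 5 2 - e 3 7
/-- Fermionic raising generator F'₊₋ (second normalization). -/
def Fpm' : Matrix (Fin 7) (Fin 7) ℂ := e 1 5 - e 7 4

/-!
H and Y' are diagonal, and the commutator with a diagonal matrix `diagonal d` scales the
matrix unit `e i j` by `d i - d j`; both summands `e 5 4` and `e 1 7` of W have the same such weight,
1/2 for H and 3/2 for Y'. For the raising generators every product of matrix units vanishes,
except in `{F'₊₋, W}`, where `e 1 5 * e 5 4` and `e 1 7 * e 7 4` both equal `e 1 4` and cancel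
because of the relative sign in F'₊₋.
-/

namespace Matrix

variable {n R : Type*} [Fintype n] [DecidableEq n]

theorem diagonal_mul_single [NonUnitalNonAssocSemiring R] (d : n → R) (i j : n) (c : R) :
    diagonal d * single i j c = single i j (d i * c) := by
  ext k l
  rw [diagonal_mul, single_apply, single_apply]
  split_ifs with h
  · rw [h.1]
  · exact mul_zero _

theorem single_mul_diagonal [NonUnitalNonAssocSemiring R] (d : n → R) (i j : n) (c : R) :
    single i j c * diagonal d = single i j (c * d j) := by
  ext k l
  rw [mul_diagonal, single_apply, single_apply]
  split_ifs with h
  · rw [h.2]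
  · exact zero_mul _

theorem lie_diagonal_single [CommRing R] (d : n → R) (i j : n) (c : R) :
    ⁅diagonal d, single i j c⁆ = (d i - d j) • single i j c := by
  rw [Ring.lie_def, diagonal_mul_single, single_mul_diagonal, smul_single, smul_eq_mul]
  ext k l
  simp only [sub_apply, single_apply]
  split_ifs <;> ring

end Matrix

open Matrix

lemma H_eq_diagonal : H = diagonal ![1/2, -1/2, 1/2, -1/2, 0, 0, 0] := by
  ext i j
  fin_cases i <;> fin_cases j <;> simp [H, e] <;> norm_num

lemma Y'_eq_diagonal : Y' = diagonal ![1/2, 1/2, -1/2, -1/2, 1, 0, -1] := by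
  ext i j
  fin_cases i <;> fin_cases j <;> simp [Y', e] <;> norm_num

lemma e_mul_e_of_eq (i j k l : ℕ) (h : ((j - 1 : ℕ) : Fin 7) = ((k - 1 : ℕ) : Fin 7)) :
    e i j * e k l = e i l := by
  rw [e, e, h, single_mul_single_same, one_mul, e]

lemma e_mul_e_of_ne (i j k l : ℕ) (h : ((j - 1 : ℕ) : Fin 7) ≠ ((k - 1 : ℕ) : Fin 7)) :
    e i j * e k l = 0 :=
  single_mul_single_of_ne (h := h) ..

section

attribute [local instance] LieRing.ofAssociativeRing

lemma lie_H_W : ⁅H, e 5 4 + e 1 7⁆ = ((1 : ℂ)/2) • (e 5 4 + e 1 7) := by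
  rw [H_eq_diagonal, lie_add, e, e, lie_diagonal_single, lie_diagonal_single, smul_add,
    smul_single, smul_single]
  simp only [Nat.add_one_sub_one, Nat.cast_ofNat, cons_val]
  norm_num

lemma lie_Y'_W : ⁅Y', e 5 4 + e 1 7⁆ = ((3 : ℂ)/2) • (e 5 4 + e 1 7) := by
  rw [Y'_eq_diagonal, lie_add, e, e, lie_diagonal_single, lie_diagonal_single, smul_add,
    smul_single, smul_single]
  simp only [Nat.add_one_sub_one, Nat.cast_ofNat, cons_val]
  norm_num

end

lemma lie_Ep_W : ⁅Ep, e 5 4 + e 1 7⁆ = 0 := by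
  simp only [Ep, Ring.lie_def, add_mul, mul_add]
  simp +decide only [e_mul_e_of_ne, add_zero, sub_self]

lemma ac_Fpp'_W : ac Fpp' (e 5 4 + e 1 7) = 0 := by
  simp only [ac, Fpp', add_mul, mul_add, sub_mul, mul_sub]
  simp +decide only [e_mul_e_of_ne, add_zero, sub_self]

lemma ac_Fpm'_W : ac Fpm' (e 5 4 + e 1 7) = 0 := by
  simp only [ac, Fpm', add_mul, mul_add, sub_mul, mul_sub]
  simp +decide only [e_mul_e_of_ne, e_mul_e_of_eq, add_zero, sub_self, zero_sub, zero_add]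
  abel

/-- With the second normalization of the diagonal sl(2|1) in sl(4|3), the fermionic
element W = e₅₄ + e₁₇ is a highest weight of a (b,j) = (3/2, 1/2) representation. -/
theorem W_highest_weight_three_half_one_half :
    ⁅H, e 5 4 + e 1 7⁆ = ((1 : ℂ)/2) • (e 5 4 + e 1 7) ∧
    ⁅Y', e 5 4 + e 1 7⁆ = ((3 : ℂ)/2) • (e 5 4 + e 1 7) ∧
    ⁅Ep, e 5 4 + e 1 7⁆ = 0 ∧
    ac Fpp' (e 5 4 + e 1 7) = 0 ∧
    ac Fpm' (e 5 4 + e 1 7) = 0 :=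
  ⟨lie_H_W, lie_Y'_W, lie_Ep_W, ac_Fpp'_W, ac_Fpm'_W⟩
end
end
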